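/- arXiv:2006.08790 — 6 statements merged into one kernel-verified Lean document; each statement's English description precedes it below -/
import Mathlib

section
/- Let Σ ∈ S^p be symmetric positive definite and s ∈ R^p. The block matrix [[Σ, Σ - diag(s)], [Σ - diag(s), Σ]] is positive semidefinite if and only if 0 ⪯ diag(s) ⪯ 2Σ, i.e. s ≥ 0 entrywise and 2Σ - diag(s) ⪰ 0. -/
/-!
In the coordinates `(x + y, x - y)` the quadratic form of `[[A, B], [B, A]]` splits as
`2 (xᴴ (A + B) x + yᴴ (A - B) y)`, so the block matrix is positive semidefinite iff `A + B` and
`A - B` are. For `A = Σ` and `B = Σ - diag s` these are `2Σ - diag s` and `diag s`.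
-/

open Matrix

open scoped ComplexOrder

namespace Matrix

variable {n 𝕜 : Type*} [RCLike 𝕜]

theorem IsHermitian.of_add_of_sub {A B : Matrix n n 𝕜} (hadd : (A + B).IsHermitian)
    (hsub : (A - B).IsHermitian) : A.IsHermitian := by
  refine IsHermitian.ext fun i j => ?_
  have h₁ := hadd.apply i j
  have h₂ := hsub.apply i j
  simp only [add_apply, sub_apply, star_add, star_sub] at h₁ h₂
  linear_combination (h₁ + h₂) / 2

theorem exists_eq_sumElim_add_sub (v : n ⊕ n → 𝕜) :
    ∃ x y : n → 𝕜, v = Sum.elim (x + y) (x - y) :=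
  ⟨(2⁻¹ : 𝕜) • (v ∘ Sum.inl + v ∘ Sum.inr), (2⁻¹ : 𝕜) • (v ∘ Sum.inl - v ∘ Sum.inr), by
    ext (i | i) <;>
      simp only [Sum.elim_inl, Sum.elim_inr, Pi.add_apply, Pi.sub_apply, Pi.smul_apply,
        Function.comp_apply, smul_eq_mul] <;>
      ring⟩

variable [Fintype n]

theorem dotProduct_fromBlocks_self_mulVec_sumElim (A B : Matrix n n 𝕜) (x y : n → 𝕜) :
    star (Sum.elim (x + y) (x - y)) ⬝ᵥ (fromBlocks A B B A *ᵥ Sum.elim (x + y) (x - y)) =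
      2 * (star x ⬝ᵥ ((A + B) *ᵥ x) + star y ⬝ᵥ ((A - B) *ᵥ y)) := by
  simp only [Function.star_sumElim, fromBlocks_mulVec, sumElim_dotProduct_sumElim,
    Sum.elim_comp_inl, Sum.elim_comp_inr, star_add, star_sub, add_mulVec, sub_mulVec, mulVec_add,
    mulVec_sub, dotProduct_add, dotProduct_sub, add_dotProduct, sub_dotProduct]
  ring

theorem posSemidef_fromBlocks_self_iff {A B : Matrix n n 𝕜} :
    (fromBlocks A B B A).PosSemidef ↔ (A + B).PosSemidef ∧ (A - B).PosSemidef := by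
  simp only [posSemidef_iff_dotProduct_mulVec, isHermitian_fromBlocks_iff]
  constructor
  · rintro ⟨⟨hA, hB, -, -⟩, hM⟩
    refine ⟨⟨hA.add hB, fun x => ?_⟩, hA.sub hB, fun y => ?_⟩
    · refine le_of_mul_le_mul_left ?_ (zero_lt_two' 𝕜)
      simpa using (hM _).trans_eq (dotProduct_fromBlocks_self_mulVec_sumElim A B x 0)
    · refine le_of_mul_le_mul_left ?_ (zero_lt_two' 𝕜)
      simpa using (hM _).trans_eq (dotProduct_fromBlocks_self_mulVec_sumElim A B 0 y)
  · rintro ⟨⟨hadd, hQadd⟩, hsub, hQsub⟩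
    have hA := hadd.of_add_of_sub hsub
    have hB : B.IsHermitian := by simpa using hadd.sub hA
    refine ⟨⟨hA, hB, hB, hA⟩, fun v => ?_⟩
    obtain ⟨x, y, rfl⟩ := exists_eq_sumElim_add_sub v
    rw [dotProduct_fromBlocks_self_mulVec_sumElim]
    exact mul_nonneg zero_le_two (add_nonneg (hQadd x) (hQsub y))

end Matrix

theorem knockoff_block_psd_iff_general {p : ℕ} (S : Matrix (Fin p) (Fin p) ℝ) (s : Fin p → ℝ) :
    (Matrix.fromBlocks S (S - diagonal s) (S - diagonal s) S).PosSemidef ↔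
      ((∀ i, 0 ≤ s i) ∧ ((2 : ℝ) • S - diagonal s).PosSemidef) := by
  rw [posSemidef_fromBlocks_self_iff, sub_sub_cancel, posSemidef_diagonal_iff, and_comm, two_smul,
    add_sub_assoc]

/-- The knockoff block covariance matrix is PSD iff `0 ⪯ diag s ⪯ 2Σ`. -/
theorem knockoff_block_psd_iff {p : ℕ} (S : Matrix (Fin p) (Fin p) ℝ) (s : Fin p → ℝ)
    (hS : S.PosDef) :
    (Matrix.fromBlocks S (S - diagonal s) (S - diagonal s) S).PosSemidef ↔
      ((∀ i, 0 ≤ s i) ∧ ((2 : ℝ) • S - diagonal s).PosSemidef) :=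
  knockoff_block_psd_iff_general S s
end

section
/- Let Σ ∈ S^p be positive definite and s ∈ R^p with 0 ≤ s_i and diag(s) ⪯ 2Σ. Then the matrix Ω = 2·diag(s) - diag(s) Σ^{-1} diag(s) is positive semidefinite. -/
open Matrix

open scoped ComplexOrder

namespace Matrix

variable {n 𝕜 : Type*} [Fintype n] [DecidableEq n] [RCLike 𝕜]

/- Completing the square: with `z = S⁻¹ D x`,
`xᴴ (2 D - D S⁻¹ D) x = 2 (x - z/2)ᴴ D (x - z/2) + ½ zᴴ (2 S - D) z`. -/
theorem two_smul_sub_mul_inv_mul_eq_conjTranspose_mul_mul_add {S D : Matrix n n 𝕜}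
    (hS : IsUnit S) (hSh : S.IsHermitian) (hDh : D.IsHermitian) :
    (2 : ℝ) • D - D * S⁻¹ * D =
      (2 : ℝ) • ((1 - (2⁻¹ : ℝ) • (S⁻¹ * D))ᴴ * D * (1 - (2⁻¹ : ℝ) • (S⁻¹ * D))) +
        (2⁻¹ : ℝ) • ((S⁻¹ * D)ᴴ * ((2 : ℝ) • S - D) * (S⁻¹ * D)) := by
  have hSS : S * S⁻¹ = 1 := mul_nonsing_inv S ((isUnit_iff_isUnit_det S).mp hS)
  simp only [conjTranspose_sub, conjTranspose_one, conjTranspose_smul, conjTranspose_mul,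
    hSh.inv.eq, hDh.eq, star_trivial, Matrix.sub_mul, Matrix.mul_sub, Matrix.smul_mul,
    Matrix.mul_smul, Matrix.one_mul, Matrix.mul_one, Matrix.mul_assoc]
  simp only [← Matrix.mul_assoc S, hSS, Matrix.one_mul]
  module

theorem posSemidef_two_smul_sub_mul_inv_mul {S D : Matrix n n 𝕜} (hS : S.PosDef)
    (hD : D.PosSemidef) (h2 : ((2 : ℝ) • S - D).PosSemidef) :
    ((2 : ℝ) • D - D * S⁻¹ * D).PosSemidef := by
  rw [two_smul_sub_mul_inv_mul_eq_conjTranspose_mul_mul_add hS.isUnit hS.isHermitian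
    hD.isHermitian]
  exact ((hD.conjTranspose_mul_mul_same _).smul (by norm_num)).add
    ((h2.conjTranspose_mul_mul_same _).smul (by norm_num))

end Matrix

/-- The conditional knockoff covariance `Ω = 2 diag s - diag s Σ⁻¹ diag s` is PSD. -/
theorem knockoff_conditional_cov_psd {p : ℕ} (S : Matrix (Fin p) (Fin p) ℝ) (s : Fin p → ℝ)
    (hS : S.PosDef) (hs : ∀ i, 0 ≤ s i)
    (h2 : ((2 : ℝ) • S - diagonal s).PosSemidef) :
    ((2 : ℝ) • diagonal s - diagonal s * S⁻¹ * diagonal s).PosSemidef :=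
  posSemidef_two_smul_sub_mul_inv_mul (𝕜 := ℝ) hS (posSemidef_diagonal_iff.mpr hs) h2
end

section
/- Let A = 2Σ - diag(s) be positive definite, j ∈ [p], Q_j = A_{j^c,j^c}, ζ = 2Σ_{jj} - s_j, and let ỹ ∈ R^p be the j-th column of 2Σ with its j-th entry set to zero. If A = L L^T is the Cholesky factorization and x solves L x = ỹ, then 4 Σ_{j^c,j}^T Q_j^{-1} Σ_{j^c,j} = ζ ||x||² / (ζ + ||x||²). -/
/-!
Write `c = A_{jᶜ,j}`, `u = Q_j⁻¹ c`, `t = cᵀu` and `β = ζ - t`. The vector `w = (-1 at j, u off j)`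
satisfies `A w = -β e_j`, so `β = wᵀAw > 0` and `A⁻¹ ỹ = e_j + (ζ / β) w`, because `ỹ = A e_j - ζ e_j`.
Hence `‖x‖² = ỹᵀ(LLᵀ)⁻¹ỹ = ỹᵀA⁻¹ỹ = ζ t / β`, and solving for `t` gives `t = ζ‖x‖² / (ζ + ‖x‖²)`.
-/

open Matrix

def msub {p : ℕ} (M : Matrix (Fin p) (Fin p) ℝ) (j : Fin p) :
    Matrix {i : Fin p // i ≠ j} {i : Fin p // i ≠ j} ℝ :=
  M.submatrix Subtype.val Subtype.val

def mcol {p : ℕ} (M : Matrix (Fin p) (Fin p) ℝ) (j : Fin p) :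
    {i : Fin p // i ≠ j} → ℝ :=
  fun i => M i.val j

variable {n R : Type*} [DecidableEq n]

def extendAt (j : n) (a : R) (u : {i // i ≠ j} → R) : n → R :=
  fun i => if h : i = j then a else u ⟨i, h⟩

def colNe (A : Matrix n n R) (j : n) : {i // i ≠ j} → R :=
  fun i => A i j

@[simp]
lemma extendAt_self (j : n) (a : R) (u : {i // i ≠ j} → R) : extendAt j a u j = a :=
  dif_pos rfl

@[simp]
lemma extendAt_val {j : n} (a : R) (u : {i // i ≠ j} → R) (i : {i // i ≠ j}) :
    extendAt j a u i = u i :=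
  dif_neg i.2

section CommRing

variable [Fintype n] [CommRing R]

lemma dotProduct_extendAt (v : n → R) (j : n) (a : R) (u : {i // i ≠ j} → R) :
    v ⬝ᵥ extendAt j a u = v j * a + (fun i : {i // i ≠ j} => v i) ⬝ᵥ u := by
  simp only [dotProduct, Fintype.sum_eq_add_sum_subtype_ne _ j, extendAt_self, extendAt_val]

lemma mulVec_extendAt (A : Matrix n n R) (j : n) (a : R) (u : {i // i ≠ j} → R) :
    A *ᵥ extendAt j a u = fun i => A i j * a + (fun k : {k // k ≠ j} => A i k) ⬝ᵥ u :=
  funext fun i => dotProduct_extendAt (A i) j a u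

variable {A : Matrix n n R} {j : n} {u : {i // i ≠ j} → R}

lemma mulVec_extendAt_neg_one (hA : A.IsSymm) (hu : A.submatrix (↑) (↑) *ᵥ u = colNe A j) :
    A *ᵥ extendAt j (-1) u = Pi.single j (colNe A j ⬝ᵥ u - A j j) := by
  rw [mulVec_extendAt]
  funext i
  by_cases hi : i = j
  · subst hi
    have hrow : (fun k : {k // k ≠ i} => A i k) = colNe A i := funext fun k => hA.apply k i
    rw [hrow, Pi.single_eq_same]
    ring
  · have hQu := congrFun hu ⟨i, hi⟩
    rw [Pi.single_eq_of_ne hi]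
    simp only [colNe] at hQu ⊢
    rw [← hQu]
    simp only [mulVec, dotProduct, submatrix_apply]
    ring

lemma dotProduct_self_eq_of_mulVec_eq {L : Matrix n n R} (hL : IsUnit (L * Lᵀ).det)
    {x y : n → R} (hx : L *ᵥ x = y) : x ⬝ᵥ x = y ⬝ᵥ ((L * Lᵀ)⁻¹ *ᵥ y) := by
  have hLdet : IsUnit L.det := by
    rw [det_mul, det_transpose] at hL
    exact isUnit_of_mul_isUnit_left hL
  have := L.invertibleOfIsUnitDet hLdet
  have hLx : L⁻¹ *ᵥ y = x := inv_mulVec_eq_vec hx.symm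
  rw [Matrix.mul_inv_rev, ← mulVec_mulVec, hLx, ← transpose_nonsing_inv, dotProduct_mulVec,
    vecMul_transpose, hLx]

end CommRing

section Field

variable [Fintype n] {K : Type*} [Field K] {A : Matrix n n K} {j : n} {u : {i // i ≠ j} → K}

lemma inv_mulVec_extendAt_zero_colNe (hA : IsUnit A.det) (hAs : A.IsSymm)
    (hu : A.submatrix (↑) (↑) *ᵥ u = colNe A j) (hβ : A j j - colNe A j ⬝ᵥ u ≠ 0) :
    A⁻¹ *ᵥ extendAt j 0 (colNe A j) =
      Pi.single j 1 + (A j j / (A j j - colNe A j ⬝ᵥ u)) • extendAt j (-1) u := by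
  have := A.invertibleOfIsUnitDet hA
  refine inv_mulVec_eq_vec ?_
  rw [mulVec_add, mulVec_smul, mulVec_single_one, mulVec_extendAt_neg_one hAs hu, ← Pi.single_smul]
  funext i
  by_cases hi : i = j
  · subst hi
    simp only [extendAt_self, Pi.add_apply, col_apply, Pi.single_eq_same, smul_eq_mul]
    field_simp
    ring
  · simp [extendAt, hi, colNe]

lemma extendAt_zero_colNe_dotProduct_inv_mulVec (hA : IsUnit A.det) (hAs : A.IsSymm)
    (hu : A.submatrix (↑) (↑) *ᵥ u = colNe A j) (hβ : A j j - colNe A j ⬝ᵥ u ≠ 0) :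
    extendAt j 0 (colNe A j) ⬝ᵥ (A⁻¹ *ᵥ extendAt j 0 (colNe A j)) =
      A j j * (colNe A j ⬝ᵥ u) / (A j j - colNe A j ⬝ᵥ u) := by
  rw [inv_mulVec_extendAt_zero_colNe hA hAs hu hβ, dotProduct_add, dotProduct_smul,
    dotProduct_single, dotProduct_extendAt, extendAt_self, smul_eq_mul]
  simp only [extendAt_val, zero_add, mul_neg, mul_one, neg_zero]
  exact (mul_div_right_comm _ _ _).symm

lemma eq_mul_div_add_of_eq_mul_div_sub {a t q : K} (ha : a ≠ 0) (hat : a - t ≠ 0)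
    (hq : q = a * t / (a - t)) : t = a * q / (a + q) := by
  have hden : a + q = a * a / (a - t) := by
    rw [hq]
    field_simp
    ring
  rw [hden, hq]
  field_simp

end Field

lemma Matrix.PosDef.colNe_dotProduct_lt_diag [Fintype n] {A : Matrix n n ℝ} (hA : A.PosDef) {j : n}
    {u : {i // i ≠ j} → ℝ} (hu : A.submatrix (↑) (↑) *ᵥ u = colNe A j) :
    colNe A j ⬝ᵥ u < A j j := by
  have hw : extendAt j (-1) u ≠ 0 := fun h => by simpa using congrFun h j
  have hpos := hA.dotProduct_mulVec_pos hw
  rw [star_trivial, mulVec_extendAt_neg_one (isHermitian_iff_isSymm.mp hA.isHermitian) hu,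
    dotProduct_single, extendAt_self] at hpos
  linarith

theorem cholesky_schur_quadratic_general {p : ℕ} (S : Matrix (Fin p) (Fin p) ℝ) (s : Fin p → ℝ)
    (j : Fin p)
    (A : Matrix (Fin p) (Fin p) ℝ) (hAdef : A = (2 : ℝ) • S - diagonal s) (hA : A.PosDef)
    (Qj : Matrix {i : Fin p // i ≠ j} {i : Fin p // i ≠ j} ℝ) (hQdef : Qj = msub A j)
    (ζ : ℝ) (hζ : ζ = 2 * S j j - s j)
    (ytil : Fin p → ℝ) (hy : ∀ i, ytil i = if i = j then 0 else 2 * S i j)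
    (L : Matrix (Fin p) (Fin p) ℝ)
    (hchol : A = L * Lᵀ)
    (x : Fin p → ℝ) (hx : L *ᵥ x = ytil) :
    4 * (mcol S j ⬝ᵥ (Qj⁻¹ *ᵥ mcol S j)) = ζ * (x ⬝ᵥ x) / (ζ + x ⬝ᵥ x) := by
  have hAs : A.IsSymm := isHermitian_iff_isSymm.mp hA.isHermitian
  have hζA : A j j = ζ := by simp [hAdef, hζ]
  have hc : colNe A j = (2 : ℝ) • mcol S j := funext fun i => by simp [colNe, mcol, hAdef, i.2]
  have hytil : ytil = extendAt j 0 (colNe A j) := funext fun i => by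
    by_cases hi : i = j <;> simp [hy, hi, extendAt, colNe, hAdef]
  have hQ : Qj.PosDef := hQdef ▸ hA.submatrix Subtype.val_injective
  set u := Qj⁻¹ *ᵥ colNe A j
  have hu : msub A j *ᵥ u = colNe A j := by
    rw [← hQdef, mulVec_mulVec, mul_nonsing_inv _ (isUnit_iff_isUnit_det _ |>.mp hQ.isUnit),
      one_mulVec]
  set t := colNe A j ⬝ᵥ u
  have ht : 4 * (mcol S j ⬝ᵥ (Qj⁻¹ *ᵥ mcol S j)) = t := by
    simp only [t, u, hc, mulVec_smul, smul_dotProduct, dotProduct_smul, smul_eq_mul]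
    ring
  have hβ : 0 < ζ - t := hζA ▸ sub_pos.mpr (hA.colNe_dotProduct_lt_diag hu)
  have hAdet : IsUnit A.det := isUnit_iff_isUnit_det _ |>.mp hA.isUnit
  have hxx : x ⬝ᵥ x = ζ * t / (ζ - t) := by
    rw [dotProduct_self_eq_of_mulVec_eq (hchol ▸ hAdet) hx, ← hchol, hytil,
      extendAt_zero_colNe_dotProduct_inv_mulVec hAdet hAs hu (hζA ▸ hβ.ne'), hζA]
  rw [ht]
  exact eq_mul_div_add_of_eq_mul_div_sub (hζA ▸ hA.diag_pos).ne' hβ.ne' hxx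

/-- Computing the Schur-complement quadratic form from a Cholesky triangular solve:
if `A = 2Σ - diag s = L Lᵀ` with `L` lower triangular, `ỹ` is the `j`-th column of `2Σ`
with its `j`-th entry zeroed, and `L x = ỹ`, then
`4 Σ_{j^c,j}ᵀ Q_j⁻¹ Σ_{j^c,j} = ζ ‖x‖² / (ζ + ‖x‖²)` where `ζ = 2Σ_{jj} - s_j`. -/
theorem cholesky_schur_quadratic {p : ℕ} (S : Matrix (Fin p) (Fin p) ℝ) (s : Fin p → ℝ)
    (j : Fin p) (hS : S.IsSymm)
    (A : Matrix (Fin p) (Fin p) ℝ) (hAdef : A = (2 : ℝ) • S - diagonal s) (hA : A.PosDef)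
    (Qj : Matrix {i : Fin p // i ≠ j} {i : Fin p // i ≠ j} ℝ) (hQdef : Qj = msub A j)
    (ζ : ℝ) (hζ : ζ = 2 * S j j - s j)
    (ytil : Fin p → ℝ) (hy : ∀ i, ytil i = if i = j then 0 else 2 * S i j)
    (L : Matrix (Fin p) (Fin p) ℝ) (hL : ∀ i i' : Fin p, i < i' → L i i' = 0)
    (hchol : A = L * Lᵀ)
    (x : Fin p → ℝ) (hx : L *ᵥ x = ytil) :
    4 * (mcol S j ⬝ᵥ (Qj⁻¹ *ᵥ mcol S j)) = ζ * (x ⬝ᵥ x) / (ζ + x ⬝ᵥ x) :=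
  cholesky_schur_quadratic_general S s j A hAdef hA Qj hQdef ζ hζ ytil hy L hchol x hx
end

section
/- Under the factor model Σ = D + U U^T with the setup of the previous statement (D̃_j and I_k + 2M_j invertible), the quantity α = 2Σ_{jj} - 4 Σ_{j^c,j}^T Q_j^{-1} Σ_{j^c,j} - λ equals (2Σ_{jj} - 4 U_{j,:} M_j U_{j,:}^T - λ) + 8 U_{j,:} M_j (I_k + 2M_j)^{-1} M_j U_{j,:}^T, where M_j = U_{j^c,:}^T D̃_j^{-1} U_{j^c,:}. -/
/-! The column `Σ_{j^c,j}` of `Σ = D + U Uᵀ` is `V u`, with `V = U_{j^c,:}` and `u = U_{j,:}ᵀ`,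
because `D` is diagonal; and `Q_j = D̃_j + 2 V Vᵀ` is a rank-`k` update of `D̃_j`, invertible by the
matrix determinant lemma. The push-through identity `(A + t V W)⁻¹ V = A⁻¹ V (1 + t M)⁻¹`, with
`M = W A⁻¹ V`, reduces `Σ_{j^c,j}ᵀ Q_j⁻¹ Σ_{j^c,j}` to `uᵀ M (1 + 2M)⁻¹ u`, and
`M (1 + tM)⁻¹ = M - t M (1 + tM)⁻¹ M` since `M = M (1 + tM)⁻¹ (1 + tM)`. -/

open Matrix

def rowsub {p k : ℕ} (U : Matrix (Fin p) (Fin k) ℝ) (j : Fin p) :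
    Matrix {i : Fin p // i ≠ j} (Fin k) ℝ :=
  U.submatrix Subtype.val id

namespace Matrix

section PushThrough

variable {m n α : Type*} [Fintype m] [DecidableEq m] [Fintype n] [DecidableEq n] [CommRing α]

theorem isUnit_det_add_smul_mul {A : Matrix m m α} (V : Matrix m n α) (W : Matrix n m α) (t : α)
    (hA : IsUnit A.det) (hB : IsUnit (1 + t • (W * A⁻¹ * V)).det) :
    IsUnit (A + t • (V * W)).det := by
  rw [← Matrix.smul_mul, det_add_mul _ _ hA, Matrix.mul_smul]
  exact hA.mul hB

theorem inv_add_smul_mul_mul {A : Matrix m m α} (V : Matrix m n α) (W : Matrix n m α) (t : α)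
    (hA : IsUnit A.det) (hB : IsUnit (1 + t • (W * A⁻¹ * V)).det) :
    (A + t • (V * W))⁻¹ * V = A⁻¹ * V * (1 + t • (W * A⁻¹ * V))⁻¹ := by
  have hX := isUnit_det_add_smul_mul V W t hA hB
  have push : (A + t • (V * W)) * (A⁻¹ * V) = V * (1 + t • (W * A⁻¹ * V)) := by
    rw [Matrix.add_mul, ← Matrix.mul_assoc, mul_nonsing_inv _ hA, Matrix.one_mul, Matrix.mul_add,
      Matrix.mul_one, Matrix.smul_mul, Matrix.mul_smul]
    simp only [Matrix.mul_assoc]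
  calc (A + t • (V * W))⁻¹ * V
      = (A + t • (V * W))⁻¹ * (V * (1 + t • (W * A⁻¹ * V))) * (1 + t • (W * A⁻¹ * V))⁻¹ := by
        rw [Matrix.mul_assoc, Matrix.mul_assoc, mul_nonsing_inv _ hB, Matrix.mul_one]
    _ = A⁻¹ * V * (1 + t • (W * A⁻¹ * V))⁻¹ := by
        rw [← push, ← Matrix.mul_assoc, nonsing_inv_mul _ hX, Matrix.one_mul]

theorem mul_inv_one_add_smul {M : Matrix n n α} (t : α) (hB : IsUnit (1 + t • M).det) :
    M * (1 + t • M)⁻¹ = M - t • (M * (1 + t • M)⁻¹ * M) := by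
  calc M * (1 + t • M)⁻¹
      = M * (1 + t • M)⁻¹ * (1 + t • M) - t • (M * (1 + t • M)⁻¹ * M) := by
        rw [Matrix.mul_add, Matrix.mul_one, Matrix.mul_smul]
        abel
    _ = M - t • (M * (1 + t • M)⁻¹ * M) := by rw [nonsing_inv_mul_cancel_right _ _ hB]

theorem mul_inv_add_smul_mul_mul {A : Matrix m m α} (V : Matrix m n α) (W : Matrix n m α) (t : α)
    (hA : IsUnit A.det) (hB : IsUnit (1 + t • (W * A⁻¹ * V)).det) :
    W * (A + t • (V * W))⁻¹ * V =
      W * A⁻¹ * V - t • (W * A⁻¹ * V * (1 + t • (W * A⁻¹ * V))⁻¹ * (W * A⁻¹ * V)) := by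
  rw [Matrix.mul_assoc, inv_add_smul_mul_mul V W t hA hB, ← mul_inv_one_add_smul t hB]
  simp only [Matrix.mul_assoc]

end PushThrough

theorem mulVec_dotProduct_mulVec_mulVec {m n α : Type*} [Fintype m] [Fintype n] [CommSemiring α]
    (V : Matrix m n α) (A : Matrix m m α) (u : n → α) :
    (V *ᵥ u) ⬝ᵥ (A *ᵥ (V *ᵥ u)) = u ⬝ᵥ ((Vᵀ * A * V) *ᵥ u) := by
  rw [← mulVec_mulVec, ← mulVec_mulVec, dotProduct_mulVec u Vᵀ, vecMul_transpose]

end Matrix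

section FactorModel

variable {p k : ℕ} (U : Matrix (Fin p) (Fin k) ℝ) (j : Fin p)

theorem msub_add_mul_transpose (D : Matrix (Fin p) (Fin p) ℝ) :
    msub (D + U * Uᵀ) j = msub D j + rowsub U j * (rowsub U j)ᵀ := by
  ext i i'
  simp [msub, rowsub, Matrix.mul_apply]

theorem mcol_add_mul_transpose {D : Matrix (Fin p) (Fin p) ℝ}
    (hD : ∀ i i' : Fin p, i ≠ i' → D i i' = 0) :
    mcol (D + U * Uᵀ) j = rowsub U j *ᵥ U j := by
  funext i
  simp [mcol, rowsub, mulVec, dotProduct, Matrix.mul_apply, hD i.val j i.prop]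

end FactorModel

/-- Under the factor model, the coordinate update value
`α = 2Σ_{jj} - 4 Σ_{j^c,j}ᵀ Q_j⁻¹ Σ_{j^c,j} - λ` decomposes into the two terms
`(2Σ_{jj} - 4 U_{j,:} M_j U_{j,:}ᵀ - λ) + 8 U_{j,:} M_j (I + 2M_j)⁻¹ M_j U_{j,:}ᵀ`. -/
theorem factor_model_alpha_decomposition {p k : ℕ}
    (D : Matrix (Fin p) (Fin p) ℝ) (hDdiag : ∀ i i' : Fin p, i ≠ i' → D i i' = 0)
    (U : Matrix (Fin p) (Fin k) ℝ) (s : Fin p → ℝ) (j : Fin p) (l : ℝ)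
    (Sg : Matrix (Fin p) (Fin p) ℝ) (hSg : Sg = D + U * Uᵀ)
    (Dt : Matrix {i : Fin p // i ≠ j} {i : Fin p // i ≠ j} ℝ)
    (hDt : Dt = (2 : ℝ) • msub D j - diagonal (fun i => s i.val))
    (hDtinv : IsUnit Dt.det)
    (Mj : Matrix (Fin k) (Fin k) ℝ)
    (hMj : Mj = (rowsub U j)ᵀ * Dt⁻¹ * rowsub U j)
    (hIM : IsUnit ((1 : Matrix (Fin k) (Fin k) ℝ) + (2 : ℝ) • Mj).det)
    (Qj : Matrix {i : Fin p // i ≠ j} {i : Fin p // i ≠ j} ℝ)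
    (hQj : Qj = (2 : ℝ) • msub Sg j - diagonal (fun i => s i.val))
    (u : Fin k → ℝ) (hu : u = fun a => U j a) :
    2 * Sg j j - 4 * (mcol Sg j ⬝ᵥ (Qj⁻¹ *ᵥ mcol Sg j)) - l =
      (2 * Sg j j - 4 * (u ⬝ᵥ (Mj *ᵥ u)) - l) +
        8 * (u ⬝ᵥ ((Mj * ((1 : Matrix (Fin k) (Fin k) ℝ) + (2 : ℝ) • Mj)⁻¹ * Mj) *ᵥ u)) := by
  set V := rowsub U j
  have hcol : mcol Sg j = V *ᵥ u := by
    rw [hSg, hu]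
    exact mcol_add_mul_transpose U j hDdiag
  have hQ : Qj = Dt + (2 : ℝ) • (V * Vᵀ) := by
    rw [hQj, hSg, msub_add_mul_transpose, hDt]
    module
  have hquad : Vᵀ * Qj⁻¹ * V = Mj - (2 : ℝ) • (Mj * (1 + (2 : ℝ) • Mj)⁻¹ * Mj) := by
    rw [hMj] at hIM ⊢
    rw [hQ]
    exact mul_inv_add_smul_mul_mul V Vᵀ 2 hDtinv hIM
  rw [hcol, mulVec_dotProduct_mulVec_mulVec, hquad, sub_mulVec, dotProduct_sub, smul_mulVec,
    dotProduct_smul, smul_eq_mul]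
  ring
end

section
/- Let Ω = C + Z Z^T with C ∈ R^{p×p} diagonal, Z ∈ R^{p×k}, and Ω positive semidefinite. Define recursively M_1 = I_k, and for j = 1,…,p: t_j = M_j z_j, Δ_{jj} = C_{jj} + z_j^T t_j, b_j = t_j/Δ_{jj} and M_{j+1} = M_j - t_j t_j^T/Δ_{jj} if Δ_{jj} > 0, else b_j = 0 and M_{j+1} = M_j (where z_j^T is the j-th row of Z). Then each Δ_{jj} ≥ 0, and setting L to be the unit lower triangular matrix with L_{ij} = z_i^T b_j for i > j and Δ = diag(Δ_{11},…,Δ_{pp}), one has Ω = L Δ L^T. -/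
/-!
The recursion is right-looking Cholesky elimination of `Ω`. After `n` pivots the Schur complement
`R n = Ω - ∑_{m < n} Δ_mm ℓ_m ℓ_mᵀ` (with `ℓ_m` the `m`-th column of `L`) vanishes outside the
trailing block `{i, i' ≥ n}`, where it equals `C + Z M_n Zᵀ` (this is `ldlResidual C Z (M n) n`):
the rank-one downdate of `M_n` is precisely the elimination of pivot `n`. Since
`R (n + 1) = Eᵀ (R n) E` with `E = 1 - e_n ℓ_nᵀ`, every `R n` is positive semidefinite, so the
pivots `Δ_nn = R n n n` are nonnegative, and a zero pivot comes with a zero column, which is why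
`b_n = 0` is then correct. Telescoping from `R 0 = Ω` to `R p = 0` gives
`Ω = ∑_j Δ_jj ℓ_j ℓ_jᵀ = L Δ Lᵀ`.
-/

open Matrix

theorem Matrix.mul_diagonal_mul_transpose_eq_sum {n R : Type*} [Fintype n] [DecidableEq n]
    [CommSemiring R] (L : Matrix n n R) (d : n → R) :
    L * diagonal d * Lᵀ = ∑ j, d j • vecMulVec (L.col j) (L.col j) := by
  ext i i'
  rw [mul_apply, sum_apply]
  refine Finset.sum_congr rfl fun j _ => ?_
  simp only [mul_diagonal, transpose_apply, smul_apply, vecMulVec_apply, col_apply, smul_eq_mul]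
  ring

open scoped ComplexOrder in
theorem Matrix.PosSemidef.col_eq_zero_of_diag_eq_zero {n 𝕜 : Type*} [Fintype n] [DecidableEq n]
    [RCLike 𝕜] {A : Matrix n n 𝕜} (hA : A.PosSemidef) {j : n} (h : A j j = 0) : A.col j = 0 := by
  rw [← mulVec_single_one, ← hA.dotProduct_mulVec_zero_iff]
  simp [h]

theorem Matrix.PosSemidef.sub_smul_vecMulVec_of_col_eq {n R : Type*} [Fintype n] [DecidableEq n]
    [CommRing R] [PartialOrder R] [StarRing R] [TrivialStar R] {A : Matrix n n R}
    (hA : A.PosSemidef) {j : n} {ℓ : n → R} (hℓ : A.col j = A j j • ℓ) :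
    (A - A j j • vecMulVec ℓ ℓ).PosSemidef := by
  have hrow : A.row j = A j j • ℓ := by
    rw [← hℓ]; ext i; simpa using hA.isHermitian.apply i j
  have hpivot : A j j * ℓ j = A j j := by simpa using (congrFun hℓ j).symm
  convert hA.conjTranspose_mul_mul_same (1 - vecMulVec (Pi.single j 1) ℓ) using 1
  simp only [conjTranspose_sub, conjTranspose_one, conjTranspose_vecMulVec, star_trivial,
    sub_mul, mul_sub, one_mul, mul_one, vecMulVec_mul, mul_vecMulVec,
    single_one_vecMul, mulVec_single_one, hrow, hℓ]
  ext i i'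
  simp only [sub_apply, smul_apply, vecMulVec_apply, col_apply, Pi.smul_apply, smul_eq_mul]
  linear_combination (-(ℓ i * ℓ i')) * hpivot

theorem dotProduct_ite_downdate_mulVec {m : Type*} [Fintype m] (N : Matrix m m ℝ) {t b : m → ℝ}
    {δ : ℝ} (hb : b = if 0 < δ then δ⁻¹ • t else 0) (x y : m → ℝ) :
    x ⬝ᵥ (if 0 < δ then N - δ⁻¹ • vecMulVec t t else N) *ᵥ y =
      x ⬝ᵥ N *ᵥ y - δ * (x ⬝ᵥ b) * (y ⬝ᵥ b) := by
  subst hb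
  split_ifs with hδ
  · simp only [sub_mulVec, smul_mulVec, vecMulVec_mulVec, dotProduct_sub, dotProduct_smul,
      smul_eq_mul, MulOpposite.smul_eq_mul_unop, MulOpposite.unop_op, dotProduct_comm t y]
    field_simp
  · simp

section LDLResidual

variable {p k : ℕ} (C : Matrix (Fin p) (Fin p) ℝ) (Z : Matrix (Fin p) (Fin k) ℝ)

def ldlResidual (N : Matrix (Fin k) (Fin k) ℝ) (n : ℕ) : Matrix (Fin p) (Fin p) ℝ :=
  of fun i i' => if n ≤ i ∧ n ≤ i' then (C + Z * N * Zᵀ) i i' else 0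

theorem ldlResidual_apply (N : Matrix (Fin k) (Fin k) ℝ) (n : ℕ) (i i' : Fin p) :
    ldlResidual C Z N n i i' = if n ≤ i ∧ n ≤ i' then C i i' + Z i ⬝ᵥ N *ᵥ Z i' else 0 := by
  simp only [ldlResidual, of_apply, Matrix.add_apply, mul_apply', transpose_apply,
    dotProduct_mulVec]
  rfl

theorem ldlResidual_one_zero : ldlResidual C Z 1 0 = C + Z * Zᵀ := by
  ext i i'; simp [ldlResidual]

theorem ldlResidual_of_le (N : Matrix (Fin k) (Fin k) ℝ) {n : ℕ} (hn : p ≤ n) :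
    ldlResidual C Z N n = 0 := by
  ext i i'
  rw [ldlResidual, of_apply, if_neg (by omega), Matrix.zero_apply]

section PivotStep

variable {C Z} {N : Matrix (Fin k) (Fin k) ℝ} {j : Fin p} {t b : Fin k → ℝ} {δ : ℝ}
  {ℓ : Fin p → ℝ}

theorem ldlResidual_apply_self (ht : t = N *ᵥ Z j) (hd : δ = C j j + Z j ⬝ᵥ t) :
    ldlResidual C Z N j j j = δ := by
  rw [ldlResidual_apply, if_pos ⟨le_rfl, le_rfl⟩, hd, ht]

theorem ldlResidual_col (hC : ∀ i i', i ≠ i' → C i i' = 0) (ht : t = N *ᵥ Z j)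
    (hd : δ = C j j + Z j ⬝ᵥ t) (hb : b = if 0 < δ then δ⁻¹ • t else 0)
    (hℓ : ∀ i, ℓ i = if i = j then 1 else if j < i then Z i ⬝ᵥ b else 0)
    (hR : (ldlResidual C Z N j).PosSemidef) :
    (ldlResidual C Z N j).col j = δ • ℓ := by
  have hjj := ldlResidual_apply_self ht hd
  rcases (hjj ▸ hR.diag_nonneg).eq_or_lt with hδ | hδ
  · rw [← hδ, zero_smul]
    exact hR.col_eq_zero_of_diag_eq_zero (hjj.trans hδ.symm)
  ext i
  rw [col_apply, Pi.smul_apply, smul_eq_mul, hℓ i]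
  rcases lt_trichotomy i j with hij | rfl | hji
  · rw [ldlResidual_apply, if_neg (by omega), if_neg hij.ne, if_neg hij.not_gt, mul_zero]
  · rw [hjj, if_pos rfl, mul_one]
  · rw [ldlResidual_apply, if_pos (by omega), hC i j hji.ne', zero_add, if_neg hji.ne',
      if_pos hji, hb, if_pos hδ, ht, dotProduct_smul, smul_eq_mul, mul_inv_cancel_left₀ hδ.ne']

theorem ldlResidual_succ (hb : b = if 0 < δ then δ⁻¹ • t else 0)
    (hℓ : ∀ i, ℓ i = if i = j then 1 else if j < i then Z i ⬝ᵥ b else 0)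
    (hR : (ldlResidual C Z N j).IsHermitian) (hcol : (ldlResidual C Z N j).col j = δ • ℓ) :
    ldlResidual C Z (if 0 < δ then N - δ⁻¹ • vecMulVec t t else N) (j + 1) =
      ldlResidual C Z N j - δ • vecMulVec ℓ ℓ := by
  have hleft : ∀ i i', i' ≤ j → ldlResidual C Z N j i i' = δ * ℓ i * ℓ i' := by
    intro i i' hi'
    rcases hi'.lt_or_eq with hi' | rfl
    · rw [ldlResidual_apply, if_neg (by omega), hℓ i', if_neg hi'.ne, if_neg hi'.not_gt,
        mul_zero]
    · rw [hℓ i', if_pos rfl, mul_one, ← smul_eq_mul, ← Pi.smul_apply, ← hcol, col_apply]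
  ext i i'
  rw [Matrix.sub_apply, Matrix.smul_apply, vecMulVec_apply, smul_eq_mul, ← mul_assoc]
  by_cases hji : j < i ∧ j < i'
  · rw [ldlResidual_apply, ldlResidual_apply,
      if_pos (show (j : ℕ) + 1 ≤ i ∧ (j : ℕ) + 1 ≤ i' by omega),
      if_pos (show (j : ℕ) ≤ i ∧ (j : ℕ) ≤ i' by omega), dotProduct_ite_downdate_mulVec N hb,
      hℓ i, hℓ i', if_neg hji.1.ne', if_neg hji.2.ne', if_pos hji.1, if_pos hji.2]
    ring
  rw [ldlResidual_apply, if_neg (by omega)]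
  rcases le_or_gt i' j with hi' | hi'
  · rw [hleft i i' hi', sub_self]
  · rw [← hR.apply i i', star_trivial, hleft i' i (by omega)]
    ring

end PivotStep

end LDLResidual

/-- Correctness of the `L Δ Lᵀ` factorization of a diagonal-plus-low-rank PSD matrix
`Ω = C + Z Zᵀ` (Smola & Vishwanathan): the recursively computed pivots `Δ_{jj}` are
nonnegative and `Ω = L Δ Lᵀ` with `L` unit lower triangular, `L_{ij} = z_iᵀ b_j` for `i > j`. -/
theorem ldl_factorization_diag_plus_low_rank {p k : ℕ}
    (C : Matrix (Fin p) (Fin p) ℝ) (hCdiag : ∀ i i' : Fin p, i ≠ i' → C i i' = 0)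
    (Z : Matrix (Fin p) (Fin k) ℝ)
    (hΩ : (C + Z * Zᵀ).PosSemidef)
    (M : ℕ → Matrix (Fin k) (Fin k) ℝ) (hM0 : M 0 = 1)
    (t b : Fin p → Fin k → ℝ) (d : Fin p → ℝ)
    (ht : ∀ j : Fin p, t j = (M j) *ᵥ (fun a => Z j a))
    (hd : ∀ j : Fin p, d j = C j j + (fun a => Z j a) ⬝ᵥ t j)
    (hb : ∀ j : Fin p, b j = if 0 < d j then (d j)⁻¹ • t j else 0)
    (hMs : ∀ j : Fin p,
      M (j + 1) = if 0 < d j then M j - (d j)⁻¹ • vecMulVec (t j) (t j) else M j)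
    (L : Matrix (Fin p) (Fin p) ℝ)
    (hL : ∀ i i' : Fin p, L i i' =
      if i = i' then 1 else if i' < i then (fun a => Z i a) ⬝ᵥ b i' else 0) :
    (∀ j : Fin p, 0 ≤ d j) ∧ C + Z * Zᵀ = L * diagonal d * Lᵀ := by
  set R : ℕ → Matrix (Fin p) (Fin p) ℝ := fun n => ldlResidual C Z (M n) n with hR
  have hdiag (j : Fin p) : R j j j = d j := ldlResidual_apply_self (ht j) (hd j)
  have hcol (j : Fin p) (hRj : (R j).PosSemidef) : (R j).col j = d j • L.col j :=
    ldlResidual_col hCdiag (ht j) (hd j) (hb j) (fun i => hL i j) hRj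
  have hstep (j : Fin p) (hRj : (R j).PosSemidef) :
      R (j + 1) = R j - d j • vecMulVec (L.col j) (L.col j) := by
    simp only [hR, hMs j]
    exact ldlResidual_succ (hb j) (fun i => hL i j) hRj.isHermitian (hcol j hRj)
  have hpsd (j : Fin p) : (R j).PosSemidef := by
    obtain ⟨n, hn⟩ := j
    induction n with
    | zero => simpa [hR, hM0, ldlResidual_one_zero] using hΩ
    | succ n ih =>
      have hRn := ih (by omega)
      have hpivot := hRn.sub_smul_vecMulVec_of_col_eq (j := ⟨n, by omega⟩)
        (by rw [hdiag]; exact hcol _ hRn)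
      rw [hdiag] at hpivot
      exact hstep ⟨n, by omega⟩ hRn ▸ hpivot
  refine ⟨fun j => hdiag j ▸ (hpsd j).diag_nonneg, ?_⟩
  calc C + Z * Zᵀ = R 0 - R p := by simp [hR, hM0, ldlResidual_one_zero, ldlResidual_of_le]
    _ = ∑ j : Fin p, (R j - R (j + 1)) := by
      rw [Fin.sum_univ_eq_sum_range (fun n => R n - R (n + 1)), Finset.sum_range_sub']
    _ = ∑ j : Fin p, d j • vecMulVec (L.col j) (L.col j) := by
      refine Finset.sum_congr rfl fun j _ => ?_
      rw [hstep j (hpsd j), sub_sub_cancel]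
    _ = L * diagonal d * Lᵀ := (mul_diagonal_mul_transpose_eq_sum L d).symm
end

section
/- Let L be unit lower triangular with L_{ij} = z_i^T b_j for i > j (z_i, b_j ∈ R^k rows of Z, B ∈ R^{p×k}), Δ diagonal PSD, and v ∈ R^p. Define w_1 = 0 ∈ R^k and iteratively u_j = √(Δ_{jj}) v_j + z_j^T w_j, w_{j+1} = w_j + √(Δ_{jj}) v_j b_j. Then u = L √Δ v. -/
open Matrix

/-!
Unrolling the recurrence gives `w_j = ∑_{i<j} √Δ_{ii} v_i b_i`, so
`z_jᵀ w_j = ∑_{i<j} (z_jᵀ b_i) √Δ_{ii} v_i`, which is the strictly lower part of row `j` of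
`L √Δ v`; the unit diagonal contributes the remaining `√Δ_{jj} v_j`.
-/

theorem eq_sum_lt_of_succ_eq_add {M : Type*} [AddCommMonoid M] {p : ℕ} (g : Fin p → M)
    (w : ℕ → M) (h0 : w 0 = 0) (hs : ∀ j : Fin p, w (j + 1) = w j + g j) (j : Fin p) :
    w j = ∑ i with i < j, g i := by
  suffices h : ∀ n ≤ p, w n = ∑ i ∈ Finset.univ.filter (fun i : Fin p => i < n), g i from
    h j j.isLt.le
  intro n hn
  induction n with
  | zero => simp [h0]
  | succ m ih =>
    have hm : m < p := hn
    have hfilter : Finset.univ.filter (fun i : Fin p => i < m + 1) =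
        insert ⟨m, hm⟩ (Finset.univ.filter fun i : Fin p => i < m) := by
      ext i
      simp only [Finset.mem_filter_univ, Finset.mem_insert, Fin.ext_iff]
      omega
    rw [hfilter, Finset.sum_insert (by simp), hs ⟨m, hm⟩, ih hm.le, add_comm]

theorem mulVec_apply_of_eq_one_add_lowerStrict {ι α : Type*} [Fintype ι] [LinearOrder ι]
    [NonAssocSemiring α] {L M : Matrix ι ι α}
    (hL : ∀ i i', L i i' = if i = i' then 1 else if i' < i then M i i' else 0)
    (x : ι → α) (i : ι) :
    (L *ᵥ x) i = x i + ∑ i' with i' < i, M i i' * x i' := by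
  have hsplit : L = 1 + of fun i i' => if i' < i then M i i' else 0 := by
    ext i i'
    rw [hL, Matrix.add_apply, one_apply, of_apply]
    split_ifs <;> simp_all
  rw [hsplit, add_mulVec, one_mulVec, Pi.add_apply, Finset.sum_filter]
  simp only [mulVec, dotProduct, of_apply, ite_mul, zero_mul]

theorem fast_cholesky_multiplication_general {p k : ℕ}
    (Z B : Matrix (Fin p) (Fin k) ℝ) (d : Fin p → ℝ)
    (v : Fin p → ℝ)
    (L : Matrix (Fin p) (Fin p) ℝ)
    (hL : ∀ i i' : Fin p, L i i' =
      if i = i' then 1 else if i' < i then (fun a => Z i a) ⬝ᵥ (fun a => B i' a) else 0)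
    (w : ℕ → Fin k → ℝ) (hw0 : w 0 = 0)
    (hw : ∀ j : Fin p, w (j + 1) = w j + (Real.sqrt (d j) * v j) • (fun a => B j a))
    (u : Fin p → ℝ)
    (hu : ∀ j : Fin p, u j = Real.sqrt (d j) * v j + (fun a => Z j a) ⬝ᵥ w j) :
    u = L *ᵥ (fun i => Real.sqrt (d i) * v i) := by
  funext j
  rw [hu, mulVec_apply_of_eq_one_add_lowerStrict hL, eq_sum_lt_of_succ_eq_add _ w hw0 hw,
    dotProduct_sum]
  simp only [dotProduct_smul, smul_eq_mul, mul_comm]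

/-- Correctness of the fast `O(pk)` multiplication `u = L √Δ v` where `L` is unit lower
triangular with `L_{ij} = z_iᵀ b_j` for `i > j`, computed via the running buffer
`w_{j+1} = w_j + √(Δ_{jj}) v_j b_j`, `u_j = √(Δ_{jj}) v_j + z_jᵀ w_j`. -/
theorem fast_cholesky_multiplication {p k : ℕ}
    (Z B : Matrix (Fin p) (Fin k) ℝ) (d : Fin p → ℝ) (hd : ∀ j, 0 ≤ d j)
    (v : Fin p → ℝ)
    (L : Matrix (Fin p) (Fin p) ℝ)
    (hL : ∀ i i' : Fin p, L i i' =
      if i = i' then 1 else if i' < i then (fun a => Z i a) ⬝ᵥ (fun a => B i' a) else 0)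
    (w : ℕ → Fin k → ℝ) (hw0 : w 0 = 0)
    (hw : ∀ j : Fin p, w (j + 1) = w j + (Real.sqrt (d j) * v j) • (fun a => B j a))
    (u : Fin p → ℝ)
    (hu : ∀ j : Fin p, u j = Real.sqrt (d j) * v j + (fun a => Z j a) ⬝ᵥ w j) :
    u = L *ᵥ (fun i => Real.sqrt (d i) * v i) :=
  fast_cholesky_multiplication_general Z B d v L hL w hw0 hw u hu
end
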